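/- arXiv:2408.08262 — 2 statements merged into one kernel-verified Lean document; each statement's English description precedes it below -/
import Mathlib

section
/- On a 1D structured grid with a pure upwind advection discretization (lower bidiagonal matrix with nonzero diagonal), choosing F-points as every second point yields a diagonal A_ff, and the ideal-operator coarse matrix R A P is again lower bidiagonal. -/
/-!
Upwind coupling only links a point to its left neighbour, so two points of equal parity are never
coupled: `A_ff` is diagonal, hence so is `A_ff⁻¹`. The ideal coarse operator is the Schur complement
`A_cc - A_cf A_ff⁻¹ A_fc`, and an entry `(c₁, c₂)` of `A_cf A_ff⁻¹ A_fc` can only be nonzero along a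
path `c₁ → f → c₂` of two left-neighbour couplings, i.e. for `c₂ + 2 = c₁`.
-/

open Matrix

namespace Matrix

variable {ι κ : Type*} [Fintype ι]

theorem exists_ne_zero_of_mul_apply_ne_zero {m o α : Type*} [NonUnitalNonAssocSemiring α]
    {M : Matrix m ι α} {N : Matrix ι o α} {i : m} {j : o} (h : (M * N) i j ≠ 0) :
    ∃ k, M i k ≠ 0 ∧ N k j ≠ 0 := by
  obtain ⟨k, -, hk⟩ := Finset.exists_ne_zero_of_sum_ne_zero h
  exact ⟨k, left_ne_zero_of_mul hk, right_ne_zero_of_mul hk⟩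

theorem IsDiag.exists_ne_zero_of_mul_mul_apply_ne_zero {m o α : Type*}
    [NonUnitalNonAssocSemiring α] {M : Matrix ι ι α} (hM : M.IsDiag) {B : Matrix m ι α}
    {C : Matrix ι o α} {i : m} {j : o} (h : (B * M * C) i j ≠ 0) :
    ∃ k, B i k ≠ 0 ∧ C k j ≠ 0 := by
  obtain ⟨k, hBM, hC⟩ := exists_ne_zero_of_mul_apply_ne_zero h
  obtain ⟨l, hB, hM'⟩ := exists_ne_zero_of_mul_apply_ne_zero hBM
  obtain rfl : l = k := by_contra fun hlk => hM' (hM hlk)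
  exact ⟨l, hB, hC⟩

variable [DecidableEq ι] {α : Type*} [CommRing α]

theorem IsDiag.inv {A : Matrix ι ι α} (hA : A.IsDiag) : A⁻¹.IsDiag := by
  rw [← hA.diagonal_diag, inv_diagonal]
  exact isDiag_diagonal _

theorem nonsing_inv_mul_mul_nonsing_inv (A : Matrix ι ι α) : A⁻¹ * A * A⁻¹ = A⁻¹ := by
  by_cases h : IsUnit A.det
  · rw [nonsing_inv_mul A h, Matrix.one_mul]
  · rw [nonsing_inv_apply_not_isUnit A h, Matrix.zero_mul, Matrix.zero_mul]

theorem fromCols_mul_fromBlocks_mul_fromRows_eq_schur [Fintype κ] [DecidableEq κ]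
    (A : Matrix ι ι α) (B : Matrix ι κ α) (C : Matrix κ ι α) (D : Matrix κ κ α) :
    fromCols (-(C * A⁻¹)) (1 : Matrix κ κ α) * fromBlocks A B C D *
      fromRows (-(A⁻¹ * B)) (1 : Matrix κ κ α) = D - C * A⁻¹ * B := by
  rw [fromCols_mul_fromBlocks, fromCols_mul_fromRows]
  have hCA : C * A⁻¹ * A * A⁻¹ = C * A⁻¹ := by
    rw [Matrix.mul_assoc C, Matrix.mul_assoc C, nonsing_inv_mul_mul_nonsing_inv]
  simp only [Matrix.neg_mul, Matrix.one_mul, Matrix.mul_one, Matrix.add_mul, Matrix.mul_neg,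
    ← Matrix.mul_assoc, hCA]
  abel

theorem IsDiag.schur_apply_ne_zero {A : Matrix ι ι α} (hA : A.IsDiag) {B : Matrix ι κ α}
    {C : Matrix κ ι α} {D : Matrix κ κ α} {i j : κ} (h : (D - C * A⁻¹ * B) i j ≠ 0) :
    D i j ≠ 0 ∨ ∃ k, C i k ≠ 0 ∧ B k j ≠ 0 := by
  by_cases hD : D i j = 0
  · rw [sub_apply, hD, zero_sub, neg_ne_zero] at h
    exact Or.inr (hA.inv.exists_ne_zero_of_mul_mul_apply_ne_zero h)
  · exact Or.inl hD

end Matrix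

def IsLowerBidiagonal {n : ℕ} {α : Type*} [Zero α] (A : Matrix (Fin n) (Fin n) α) : Prop :=
  ∀ i j : Fin n, A i j ≠ 0 → (j : ℕ) = i ∨ (j : ℕ) + 1 = i

theorem IsLowerBidiagonal.isDiag_submatrix {n : ℕ} {α ι : Type*} [Zero α]
    {A : Matrix (Fin n) (Fin n) α} (hA : IsLowerBidiagonal A) {e : ι → Fin n}
    (he : Function.Injective e) (hpar : ∀ i j, (e i : ℕ) % 2 = (e j : ℕ) % 2) :
    (A.submatrix e e).IsDiag := by
  intro i j hij
  by_contra hne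
  have := hpar i j
  rcases hA _ _ hne with h | h
  · exact hij (he (Fin.ext h.symm))
  · omega

theorem upwind_1d_ideal_coarsening_general {n : ℕ}
    (A : Matrix (Fin n) (Fin n) ℝ)
    (hbd : ∀ i j : Fin n, A i j ≠ 0 → ((j : ℕ) = i ∨ (j : ℕ) + 1 = i)) :
    (A.submatrix (fun i : {x : Fin n // (x : ℕ) % 2 = 1} => (i : Fin n))
        (fun j : {x : Fin n // (x : ℕ) % 2 = 1} => (j : Fin n))).IsDiag ∧
    (let F := {x : Fin n // (x : ℕ) % 2 = 1}
     let C := {x : Fin n // (x : ℕ) % 2 = 0}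
     let Aff : Matrix F F ℝ := A.submatrix (fun i => (i : Fin n)) (fun j => (j : Fin n))
     let Afc : Matrix F C ℝ := A.submatrix (fun i => (i : Fin n)) (fun j => (j : Fin n))
     let Acf : Matrix C F ℝ := A.submatrix (fun i => (i : Fin n)) (fun j => (j : Fin n))
     let Acc : Matrix C C ℝ := A.submatrix (fun i => (i : Fin n)) (fun j => (j : Fin n))
     let R : Matrix C (F ⊕ C) ℝ := Matrix.fromCols (-(Acf * Aff⁻¹)) 1
     let P : Matrix (F ⊕ C) C ℝ := Matrix.fromRows (-(Aff⁻¹ * Afc)) 1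
     let coarse : Matrix C C ℝ := R * Matrix.fromBlocks Aff Afc Acf Acc * P
     ∀ c₁ c₂ : C, coarse c₁ c₂ ≠ 0 →
       ((c₂ : Fin n) : ℕ) = ((c₁ : Fin n) : ℕ) ∨
       ((c₂ : Fin n) : ℕ) + 2 = ((c₁ : Fin n) : ℕ)) := by
  have hF := IsLowerBidiagonal.isDiag_submatrix hbd
    (Subtype.val_injective (p := fun x : Fin n => (x : ℕ) % 2 = 1)) fun i j => i.2.trans j.2.symm
  refine ⟨hF, fun c₁ c₂ hne => ?_⟩
  rw [fromCols_mul_fromBlocks_mul_fromRows_eq_schur] at hne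
  have hc₁ := c₁.2
  have hc₂ := c₂.2
  rcases hF.schur_apply_ne_zero hne with hcc | ⟨f, hcf, hfc⟩
  · have := hbd c₁ c₂ hcc
    omega
  · have := f.2
    have := hbd c₁ f hcf
    have := hbd f c₂ hfc
    omega

/-- On a 1D structured grid with a pure upwind advection discretization (`A` lower
bidiagonal with nonzero diagonal), choosing F-points as every second point (odd
indices) yields a diagonal `A_ff`, and the ideal-operator coarse matrix `R A P`
(equivalently the Schur complement on the even points) is again lower bidiagonal:
its entry at coarse points `c₁, c₂` vanishes unless `c₂ = c₁` or `c₂ + 2 = c₁`. -/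
theorem upwind_1d_ideal_coarsening {n : ℕ}
    (A : Matrix (Fin n) (Fin n) ℝ)
    (hbd : ∀ i j : Fin n, A i j ≠ 0 → ((j : ℕ) = i ∨ (j : ℕ) + 1 = i))
    (hdiag : ∀ i, A i i ≠ 0) :
    (A.submatrix (fun i : {x : Fin n // (x : ℕ) % 2 = 1} => (i : Fin n))
        (fun j : {x : Fin n // (x : ℕ) % 2 = 1} => (j : Fin n))).IsDiag ∧
    (let F := {x : Fin n // (x : ℕ) % 2 = 1}
     let C := {x : Fin n // (x : ℕ) % 2 = 0}
     let Aff : Matrix F F ℝ := A.submatrix (fun i => (i : Fin n)) (fun j => (j : Fin n))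
     let Afc : Matrix F C ℝ := A.submatrix (fun i => (i : Fin n)) (fun j => (j : Fin n))
     let Acf : Matrix C F ℝ := A.submatrix (fun i => (i : Fin n)) (fun j => (j : Fin n))
     let Acc : Matrix C C ℝ := A.submatrix (fun i => (i : Fin n)) (fun j => (j : Fin n))
     let R : Matrix C (F ⊕ C) ℝ := Matrix.fromCols (-(Acf * Aff⁻¹)) 1
     let P : Matrix (F ⊕ C) C ℝ := Matrix.fromRows (-(Aff⁻¹ * Afc)) 1
     let coarse : Matrix C C ℝ := R * Matrix.fromBlocks Aff Afc Acf Acc * P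
     ∀ c₁ c₂ : C, coarse c₁ c₂ ≠ 0 →
       ((c₂ : Fin n) : ℕ) = ((c₁ : Fin n) : ℕ) ∨
       ((c₂ : Fin n) : ℕ) + 2 = ((c₁ : Fin n) : ℕ)) :=
  upwind_1d_ideal_coarsening_general A hbd
end

section
/- Error propagation of exact F-point smoothing followed by an exact coarse-grid correction with ideal operators is zero: for A = [[A_ff, A_fc],[A_cf, A_cc]] with A_ff invertible and Schur complement S = A_cc − A_cf A_ff^{-1} A_fc invertible, the two-grid error operator (I − P S^{-1} R A)(I − M A) vanishes, where M = [[A_ff^{-1}, 0],[0,0]], R = [−A_cf A_ff^{-1}, I], P = [−A_ff^{-1} A_fc ; I]. -/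
open Matrix

/-! The ideal prolongation `P = [-A_ff⁻¹ A_fc; I]` spans the range of the exact F-smoother's error
propagator: `I - M A = P [0 I]`. Moreover the Galerkin coarse operator `R A P` is exactly the Schur
complement `S`, so the coarse-grid correction `I - P S⁻¹ R A` annihilates `P`, hence the product. -/

namespace Matrix

variable {K : Type*} [CommRing K] {f c : Type*} [Fintype f] [DecidableEq f] [Fintype c]
  [DecidableEq c]

theorem one_sub_mul_inv_mul_mul_mul_eq_zero_of_mul_mul_eq {P : Matrix f c K}
    {R : Matrix c f K} {A : Matrix f f K} {S : Matrix c c K} (hRAP : R * A * P = S)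
    (hS : IsUnit S.det) : (1 - P * S⁻¹ * R * A) * P = 0 := by
  have hcorr : P * S⁻¹ * R * A * P = P := by
    rw [Matrix.mul_assoc (P * S⁻¹ * R), Matrix.mul_assoc (P * S⁻¹), Matrix.mul_assoc P,
      ← Matrix.mul_assoc R, hRAP, nonsing_inv_mul S hS, Matrix.mul_one]
  rw [Matrix.sub_mul, Matrix.one_mul, hcorr, sub_self]

variable {A : Matrix f f K} {B : Matrix f c K} {C : Matrix c f K} {D : Matrix c c K}

theorem one_sub_fromBlocks_inv_mul_fromBlocks (hA : IsUnit A.det) :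
    1 - fromBlocks A⁻¹ 0 0 0 * fromBlocks A B C D =
      fromRows (-(A⁻¹ * B)) (1 : Matrix c c K) * fromCols (0 : Matrix c f K) 1 := by
  rw [← fromBlocks_one, fromBlocks_multiply, fromRows_mul_fromCols, sub_eq_add_neg,
    fromBlocks_neg, fromBlocks_add, nonsing_inv_mul A hA]
  simp

theorem fromCols_mul_fromBlocks_mul_fromRows (hA : IsUnit A.det) :
    fromCols (-(C * A⁻¹)) (1 : Matrix c c K) * fromBlocks A B C D *
      fromRows (-(A⁻¹ * B)) (1 : Matrix c c K) = D - C * A⁻¹ * B := by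
  rw [fromCols_mul_fromBlocks, fromCols_mul_fromRows]
  simp only [Matrix.neg_mul, Matrix.mul_assoc, nonsing_inv_mul A hA, Matrix.mul_one,
    Matrix.one_mul, neg_add_cancel, Matrix.mul_neg, Matrix.zero_mul]
  abel

end Matrix

/-- Exact F-point smoothing followed by an exact coarse-grid correction with the
ideal operators annihilates the error: `(I - P S⁻¹ R A)(I - M A) = 0`, where
`M = [[A_ff⁻¹,0],[0,0]]` is the exact F-point smoother, `R`, `P` are the ideal
restriction/prolongation and `S` is the (invertible) Schur complement. -/
theorem ideal_two_grid_exact {nF nC : ℕ}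
    (Aff : Matrix (Fin nF) (Fin nF) ℝ) (Afc : Matrix (Fin nF) (Fin nC) ℝ)
    (Acf : Matrix (Fin nC) (Fin nF) ℝ) (Acc : Matrix (Fin nC) (Fin nC) ℝ)
    (hAff : IsUnit Aff.det) (hS : IsUnit (Acc - Acf * Aff⁻¹ * Afc).det) :
    (1 - Matrix.fromRows (-(Aff⁻¹ * Afc)) (1 : Matrix (Fin nC) (Fin nC) ℝ) *
          (Acc - Acf * Aff⁻¹ * Afc)⁻¹ *
          Matrix.fromCols (-(Acf * Aff⁻¹)) (1 : Matrix (Fin nC) (Fin nC) ℝ) *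
          Matrix.fromBlocks Aff Afc Acf Acc) *
      (1 - Matrix.fromBlocks Aff⁻¹ 0 0 0 * Matrix.fromBlocks Aff Afc Acf Acc) = 0 := by
  rw [one_sub_fromBlocks_inv_mul_fromBlocks hAff, ← Matrix.mul_assoc,
    one_sub_mul_inv_mul_mul_mul_eq_zero_of_mul_mul_eq
      (fromCols_mul_fromBlocks_mul_fromRows hAff) hS, Matrix.zero_mul]
end
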